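/- Let H be a graded vector space with a graded commutative associative product • of degree −n and a degree +1 operator B with B² = 0 making (H, •, B) a Batalin–Vilkovisky algebra (up to shift), and suppose there are linear maps π_* : HC → H and β : H → HC (of degrees 0 and +1 respectively, for a graded space HC) with π_* ∘ β = B and β ∘ π_* = 0. Then {a, b} := (−1)^{|a|} β(π_*(a) • π_*(b)) defines a graded Lie bracket of degree +1 on HC: it is graded skew-symmetric and satisfies the graded Jacobi identity. -/

import Mathlib

/-!
Write `x = π a`, `y = π b`, `z = π c`. Since `B ∘ π = π ∘ β ∘ π = 0` and `β ∘ B = β ∘ π ∘ β = 0`,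
applying `β` to the second-order identity for `B((x • y) • z)` kills every term but three, and
graded commutativity turns these into a relation between the elements `β(B(u • v) • w)` for the
three cyclic rotations `(u, v, w)` of `(x, y, z)`. Each term of the Jacobi sum is a signed copy of
one of these elements, and the signed sum vanishes: it is a multiple of one of the three
cyclic relations as soon as one of `n|a|`, `n|b|`, `n|c|` is even, and it is the sum of the three
relations when `n`, `|a|`, `|b|`, `|c|` are all odd. Skew-symmetry is graded commutativity of `•`.
-/

variable (H HC : ℤ → Type*) [∀ i, AddCommGroup (H i)] [∀ i, AddCommGroup (HC i)]
variable (n : ℤ)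

section

variable (mul : ∀ {i j l : ℤ}, i + j = l + n → H i → H j → H l)
  (B : ∀ {i j : ℤ}, j = i + 1 → H i → H j)
  (π : ∀ i, HC i →+ H i)
  (β : ∀ {i j : ℤ}, j = i + 1 → H i → HC j)

/-- The bracket `{a, b} := (−1)^{|a|} β(π_*(a) • π_*(b))`. -/
def cycBracket {i j l : ℤ} (h : i + j + 1 = l + n) (a : HC i) (b : HC j) : HC l :=
  (Int.negOnePow i : ℤ) •
    β (by omega : l = (i + j - n) + 1)
      (mul (by omega : i + j = (i + j - n) + n) (π i a) (π j b))

lemma negOnePow_smul_negOnePow_smul {M : Type*} [AddCommGroup M] (a b : ℤ) (v : M) :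
    (a.negOnePow : ℤ) • (b.negOnePow : ℤ) • v = ((a + b).negOnePow : ℤ) • v := by
  rw [smul_smul, ← Units.val_mul, ← Int.negOnePow_add]

lemma negOnePow_smul_congr {M : Type*} [AddCommGroup M] {a b : ℤ} (h : Even (a - b)) (v : M) :
    (a.negOnePow : ℤ) • v = (b.negOnePow : ℤ) • v := by
  rw [(Int.negOnePow_eq_iff a b).2 h]

lemma map_zsmul_of_map_add {M N : Type*} [AddCommGroup M] [AddCommGroup N] {f : M → N}
    (hf : ∀ x y, f (x + y) = f x + f y) (r : ℤ) (x : M) : f (r • x) = r • f x :=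
  map_zsmul (AddMonoidHom.mk' f hf) r x

lemma map_zero_of_map_add {M N : Type*} [AddCommGroup M] [AddCommGroup N] {f : M → N}
    (hf : ∀ x y, f (x + y) = f x + f y) : f 0 = 0 :=
  map_zero (AddMonoidHom.mk' f hf)

section JacobiSum

variable {M : Type*} [AddCommGroup M] {i j m n : ℤ} {T₁ T₂ T₃ : M}

lemma jacobi_sum_eq_zero_of_even (hin : Even (i * n))
    (hA : T₁ + (((i + j) * m).negOnePow : ℤ) • T₂ + ((i * (j + m - n)).negOnePow : ℤ) • T₃ = 0) :
    ((i * m).negOnePow : ℤ) • T₁ + ((m * j).negOnePow : ℤ) • T₂ + ((j * i).negOnePow : ℤ) • T₃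
      = 0 := by
  obtain ⟨k, hk⟩ := hin
  calc _ = ((i * m).negOnePow : ℤ) • (T₁ + (((i + j) * m).negOnePow : ℤ) • T₂
              + ((i * (j + m - n)).negOnePow : ℤ) • T₃) := by
        rw [smul_add, smul_add, negOnePow_smul_negOnePow_smul, negOnePow_smul_negOnePow_smul,
          (Int.negOnePow_eq_iff (i * m + (i + j) * m) (m * j)).2 ⟨i * m, by ring⟩,
          (Int.negOnePow_eq_iff (i * m + i * (j + m - n)) (j * i)).2
            ⟨i * m - k, by linear_combination -hk⟩]
    _ = 0 := by rw [hA, smul_zero]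

lemma jacobi_sum_eq_zero_of_odd (hi : Odd i) (hj : Odd j) (hm : Odd m) (hn : Odd n)
    (hA : T₁ + (((i + j) * m).negOnePow : ℤ) • T₂ + ((i * (j + m - n)).negOnePow : ℤ) • T₃ = 0)
    (hB : T₃ + (((j + m) * i).negOnePow : ℤ) • T₁ + ((j * (m + i - n)).negOnePow : ℤ) • T₂ = 0)
    (hC : T₂ + (((m + i) * j).negOnePow : ℤ) • T₃ + ((m * (i + j - n)).negOnePow : ℤ) • T₁ = 0) :
    ((i * m).negOnePow : ℤ) • T₁ + ((m * j).negOnePow : ℤ) • T₂ + ((j * i).negOnePow : ℤ) • T₃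
      = 0 := by
  -- The relations become `T₁ + T₂ - T₃ = 0` and its two rotations, whose sum is `T₁ + T₂ + T₃`.
  rw [← Int.not_even_iff_odd] at hi hj hm hn
  simp only [Int.even_add, Int.even_sub, hi, hj, hm, hn, Even.mul_right, Odd.mul,
    ← Int.not_even_iff_odd, iff_false, not_true_eq_false, not_false_eq_true, Int.negOnePow_even,
    Int.negOnePow_odd, Units.val_one, Units.val_neg, Int.reduceNeg, one_smul, neg_smul]
    at hA hB hC ⊢
  linear_combination (norm := module) -(hA + hB + hC)

theorem jacobi_sum_eq_zero_of_cyclic_relations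
    (hA : T₁ + (((i + j) * m).negOnePow : ℤ) • T₂ + ((i * (j + m - n)).negOnePow : ℤ) • T₃ = 0)
    (hB : T₃ + (((j + m) * i).negOnePow : ℤ) • T₁ + ((j * (m + i - n)).negOnePow : ℤ) • T₂ = 0)
    (hC : T₂ + (((m + i) * j).negOnePow : ℤ) • T₃ + ((m * (i + j - n)).negOnePow : ℤ) • T₁ = 0) :
    ((i * m).negOnePow : ℤ) • T₁ + ((m * j).negOnePow : ℤ) • T₂ + ((j * i).negOnePow : ℤ) • T₃
      = 0 := by
  rcases Int.even_or_odd (i * n) with hin | hin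
  · exact jacobi_sum_eq_zero_of_even hin hA
  rcases Int.even_or_odd (j * n) with hjn | hjn
  · rw [← jacobi_sum_eq_zero_of_even hjn hB]; abel
  rcases Int.even_or_odd (m * n) with hmn | hmn
  · rw [← jacobi_sum_eq_zero_of_even hmn hC]; abel
  obtain ⟨hi, hn⟩ := Int.odd_mul.1 hin
  exact jacobi_sum_eq_zero_of_odd hi (Int.odd_mul.1 hjn).1 (Int.odd_mul.1 hmn).1 hn hA hB hC

end JacobiSum

section CyclicBracket

variable {H HC} {n}

def IsSecondOrder : Prop :=
  ∀ {i j m l : ℤ} (h : i + j + m + 1 = l + 2 * n) (x : H i) (y : H j) (z : H m),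
      B (by linarith : l = (i + j + m - 2*n) + 1)
          (mul (by linarith : (i + j - n) + m = (i + j + m - 2*n) + n)
            (mul (by linarith : i + j = (i + j - n) + n) x y) z)
        = mul (by linarith : (i + j - n + 1) + m = l + n)
            (B (by linarith : i + j - n + 1 = (i + j - n) + 1)
              (mul (by linarith : i + j = (i + j - n) + n) x y)) z
          + (Int.negOnePow (j * m) : ℤ) •
              mul (by linarith : (i + m - n + 1) + j = l + n)
                (B (by linarith : i + m - n + 1 = (i + m - n) + 1)
                  (mul (by linarith : i + m = (i + m - n) + n) x z)) y
          + (Int.negOnePow i : ℤ) •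
              mul (by linarith : i + (j + m - n + 1) = l + n) x
                (B (by linarith : j + m - n + 1 = (j + m - n) + 1)
                  (mul (by linarith : j + m = (j + m - n) + n) y z))
          - mul (by linarith : (i + 1) + (j + m - n) = l + n)
              (B rfl x) (mul (by linarith : j + m = (j + m - n) + n) y z)
          - (Int.negOnePow i : ℤ) •
              mul (by linarith : i + (j + 1 + m - n) = l + n) x
                (mul (by linarith : (j + 1) + m = (j + 1 + m - n) + n) (B rfl y) z)
          - (Int.negOnePow (i + j) : ℤ) •
              mul (by linarith : (i + j - n) + (m + 1) = l + n)
                (mul (by linarith : i + j = (i + j - n) + n) x y) (B rfl z)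

def nestedTerm {i j m l : ℤ} (h : i + j + m + 2 = l + 2 * n) (u : H i) (v : H j) (w : H m) :
    HC l :=
  β (by linarith : l = (l - 1) + 1)
    (mul (by linarith : (i + j - n + 1) + m = (l - 1) + n)
      (B (by linarith : i + j - n + 1 = (i + j - n) + 1)
        (mul (by linarith : i + j = (i + j - n) + n) u v)) w)

lemma nestedTerm_eq {H HC : ℤ → Type*} {n : ℤ}
    {mul : ∀ {i j l : ℤ}, i + j = l + n → H i → H j → H l}
    {B : ∀ {i j : ℤ}, j = i + 1 → H i → H j} {β : ∀ {i j : ℤ}, j = i + 1 → H i → HC j}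
    {i j m l p p' r : ℤ} (h : i + j + m + 2 = l + 2 * n)
    (h₁ : i + j = p + n) (h₂ : p' = p + 1) (h₃ : p' + m = r + n) (h₄ : l = r + 1)
    (u : H i) (v : H j) (w : H m) :
    β h₄ (mul h₃ (B h₂ (mul h₁ u v)) w) = nestedTerm mul B β h u v w := by
  obtain rfl : p = i + j - n := by omega
  subst h₂
  obtain rfl : r = l - 1 := by omega
  rfl

variable {mul B π β}

lemma cycBracket_eq {i j l p : ℤ} (h : i + j + 1 = l + n) (hp : i + j = p + n) (hl : l = p + 1)
    (a : HC i) (b : HC j) :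
    cycBracket H HC n mul π β h a b = (i.negOnePow : ℤ) • β hl (mul hp (π i a) (π j b)) := by
  obtain rfl : p = i + j - n := by omega
  rfl

lemma B_π_eq_zero (hπβ : ∀ {i j : ℤ} (h : j = i + 1) (x : H i), π j (β h x) = B h x)
    (hβπ : ∀ {i j : ℤ} (h : j = i + 1) (x : HC i), β h (π i x) = 0)
    {i j : ℤ} (h : j = i + 1) (a : HC i) : B h (π i a) = 0 := by
  rw [← hπβ h (π i a), hβπ h a, map_zero]

lemma β_B_eq_zero (hπβ : ∀ {i j : ℤ} (h : j = i + 1) (x : H i), π j (β h x) = B h x)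
    (hβπ : ∀ {i j : ℤ} (h : j = i + 1) (x : HC i), β h (π i x) = 0)
    {i j l : ℤ} (h₁ : j = i + 1) (h₂ : l = j + 1) (x : H i) : β h₂ (B h₁ x) = 0 := by
  rw [← hπβ h₁ x, hβπ h₂]

lemma nestedTerm_swap_left
    (hmul_addl : ∀ {i j l : ℤ} (h : i + j = l + n) (a a' : H i) (b : H j),
      mul h (a + a') b = mul h a b + mul h a' b)
    (hcomm : ∀ {i j l : ℤ} (h : i + j = l + n) (h' : j + i = l + n) (a : H i) (b : H j),
      mul h a b = (Int.negOnePow (i * j) : ℤ) • mul h' b a)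
    (hB_add : ∀ {i j : ℤ} (h : j = i + 1) (a a' : H i), B h (a + a') = B h a + B h a')
    (hβ_add : ∀ {i j : ℤ} (h : j = i + 1) (x y : H i), β h (x + y) = β h x + β h y)
    {i j m l : ℤ} (h : i + j + m + 2 = l + 2 * n) (u : H i) (v : H j) (w : H m) :
    nestedTerm mul B β h u v w
      = ((i * j).negOnePow : ℤ) •
          nestedTerm mul B β (by linarith : j + i + m + 2 = l + 2 * n) v u w := by
  rw [nestedTerm, hcomm _ (by omega : j + i = (i + j - n) + n),
    map_zsmul_of_map_add (hB_add _), map_zsmul_of_map_add (f := (mul _ · w)) (hmul_addl _ · · w),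
    map_zsmul_of_map_add (hβ_add _), nestedTerm_eq (β := β)]

lemma β_mul_B_eq_nestedTerm
    (hcomm : ∀ {i j l : ℤ} (h : i + j = l + n) (h' : j + i = l + n) (a : H i) (b : H j),
      mul h a b = (Int.negOnePow (i * j) : ℤ) • mul h' b a)
    (hβ_add : ∀ {i j : ℤ} (h : j = i + 1) (x y : H i), β h (x + y) = β h x + β h y)
    {i j m l : ℤ} (h : i + j + m + 2 = l + 2 * n) (u : H i) (v : H j) (w : H m) :
    β (by linarith : l = (l - 1) + 1)
        (mul (by linarith : i + (j + m - n + 1) = (l - 1) + n) u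
          (B (by linarith : j + m - n + 1 = (j + m - n) + 1)
            (mul (by linarith : j + m = (j + m - n) + n) v w)))
      = ((i * (j + m - n + 1)).negOnePow : ℤ) •
          nestedTerm mul B β (by linarith : j + m + i + 2 = l + 2 * n) v w u := by
  rw [hcomm _ (by omega : (j + m - n + 1) + i = (l - 1) + n), map_zsmul_of_map_add (hβ_add _)]
  rfl

lemma β_second_order_π
    (hmul_addl : ∀ {i j l : ℤ} (h : i + j = l + n) (a a' : H i) (b : H j),
      mul h (a + a') b = mul h a b + mul h a' b)
    (hmul_addr : ∀ {i j l : ℤ} (h : i + j = l + n) (a : H i) (b b' : H j),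
      mul h a (b + b') = mul h a b + mul h a b')
    (hsecond : IsSecondOrder mul B)
    (hπβ : ∀ {i j : ℤ} (h : j = i + 1) (x : H i), π j (β h x) = B h x)
    (hβπ : ∀ {i j : ℤ} (h : j = i + 1) (x : HC i), β h (π i x) = 0)
    (hβ_add : ∀ {i j : ℤ} (h : j = i + 1) (x y : H i), β h (x + y) = β h x + β h y)
    {i j m l : ℤ} (h : i + j + m + 2 = l + 2 * n) (a : HC i) (b : HC j) (c : HC m) :
    nestedTerm mul B β h (π i a) (π j b) (π m c)
      + ((j * m).negOnePow : ℤ) •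
          nestedTerm mul B β (by linarith : i + m + j + 2 = l + 2 * n) (π i a) (π m c) (π j b)
      + (i.negOnePow : ℤ) •
          β (by linarith : l = (l - 1) + 1)
            (mul (by linarith : i + (j + m - n + 1) = (l - 1) + n) (π i a)
              (B (by linarith : j + m - n + 1 = (j + m - n) + 1)
                (mul (by linarith : j + m = (j + m - n) + n) (π j b) (π m c))))
      = 0 := by
  have mul_zero_left : ∀ {i j l : ℤ} (h : i + j = l + n) (y : H j), mul h 0 y = 0 :=
    fun h y => map_zero_of_map_add (f := (mul h · y)) (hmul_addl h · · y)
  have mul_zero_right : ∀ {i j l : ℤ} (h : i + j = l + n) (x : H i), mul h x 0 = 0 :=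
    fun h x => map_zero_of_map_add (hmul_addr h x)
  have hB := hsecond (l := l - 1) (by omega) (π i a) (π j b) (π m c)
  simp only [B_π_eq_zero hπβ hβπ, mul_zero_left, mul_zero_right, smul_zero, sub_zero] at hB
  have hβB := congrArg (β (by omega : l = (l - 1) + 1)) hB
  rw [β_B_eq_zero hπβ hβπ, hβ_add, hβ_add, map_zsmul_of_map_add (hβ_add _),
    map_zsmul_of_map_add (hβ_add _)] at hβB
  exact hβB.symm

lemma nestedTerm_cyclic_relation
    (hmul_addl : ∀ {i j l : ℤ} (h : i + j = l + n) (a a' : H i) (b : H j),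
      mul h (a + a') b = mul h a b + mul h a' b)
    (hmul_addr : ∀ {i j l : ℤ} (h : i + j = l + n) (a : H i) (b b' : H j),
      mul h a (b + b') = mul h a b + mul h a b')
    (hcomm : ∀ {i j l : ℤ} (h : i + j = l + n) (h' : j + i = l + n) (a : H i) (b : H j),
      mul h a b = (Int.negOnePow (i * j) : ℤ) • mul h' b a)
    (hB_add : ∀ {i j : ℤ} (h : j = i + 1) (a a' : H i), B h (a + a') = B h a + B h a')
    (hsecond : IsSecondOrder mul B)
    (hπβ : ∀ {i j : ℤ} (h : j = i + 1) (x : H i), π j (β h x) = B h x)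
    (hβπ : ∀ {i j : ℤ} (h : j = i + 1) (x : HC i), β h (π i x) = 0)
    (hβ_add : ∀ {i j : ℤ} (h : j = i + 1) (x y : H i), β h (x + y) = β h x + β h y)
    {i j m l : ℤ} (h : i + j + m + 2 = l + 2 * n) (a : HC i) (b : HC j) (c : HC m) :
    nestedTerm mul B β h (π i a) (π j b) (π m c)
      + (((i + j) * m).negOnePow : ℤ) •
          nestedTerm mul B β (by linarith : m + i + j + 2 = l + 2 * n) (π m c) (π i a) (π j b)
      + ((i * (j + m - n)).negOnePow : ℤ) •
          nestedTerm mul B β (by linarith : j + m + i + 2 = l + 2 * n) (π j b) (π m c) (π i a)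
      = 0 := by
  have hrel := β_second_order_π hmul_addl hmul_addr hsecond hπβ hβπ hβ_add h a b c
  rw [nestedTerm_swap_left hmul_addl hcomm hB_add hβ_add _ (π i a) (π m c),
    β_mul_B_eq_nestedTerm hcomm hβ_add h, negOnePow_smul_negOnePow_smul,
    negOnePow_smul_negOnePow_smul] at hrel
  rwa [show j * m + i * m = (i + j) * m by ring,
    (Int.negOnePow_eq_iff (i + i * (j + m - n + 1)) (i * (j + m - n))).2 ⟨i, by ring⟩] at hrel

lemma negOnePow_smul_cycBracket_cycBracket
    (hmul_addl : ∀ {i j l : ℤ} (h : i + j = l + n) (a a' : H i) (b : H j),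
      mul h (a + a') b = mul h a b + mul h a' b)
    (hπβ : ∀ {i j : ℤ} (h : j = i + 1) (x : H i), π j (β h x) = B h x)
    (hβ_add : ∀ {i j : ℤ} (h : j = i + 1) (x y : H i), β h (x + y) = β h x + β h y)
    {i j m l : ℤ} (h : i + j + m + 2 = l + 2 * n) (a : HC i) (b : HC j) (c : HC m) :
    (((i + 1) * (m + 1)).negOnePow : ℤ) •
        cycBracket H HC n mul π β (by linarith : (i + j + 1 - n) + m + 1 = l + n)
          (cycBracket H HC n mul π β (by linarith : i + j + 1 = (i + j + 1 - n) + n) a b) c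
      = ((l + n).negOnePow : ℤ) • ((i * m).negOnePow : ℤ) •
          nestedTerm mul B β h (π i a) (π j b) (π m c) := by
  rw [cycBracket_eq _ (by omega : (i + j + 1 - n) + m = (l - 1) + n) (by omega : l = (l - 1) + 1),
    cycBracket_eq _ (by omega : i + j = (i + j - n) + n)
      (by omega : i + j + 1 - n = (i + j - n) + 1),
    map_zsmul (π _), hπβ, map_zsmul_of_map_add (f := (mul _ · _)) (hmul_addl _ · · _),
    map_zsmul_of_map_add (hβ_add _), nestedTerm_eq (β := β) h]
  simp only [negOnePow_smul_negOnePow_smul]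
  exact negOnePow_smul_congr ⟨i, by linear_combination h⟩ _

lemma cycBracket_swap
    (hcomm : ∀ {i j l : ℤ} (h : i + j = l + n) (h' : j + i = l + n) (a : H i) (b : H j),
      mul h a b = (Int.negOnePow (i * j) : ℤ) • mul h' b a)
    (hβ_add : ∀ {i j : ℤ} (h : j = i + 1) (x y : H i), β h (x + y) = β h x + β h y)
    {i j l : ℤ} (h : i + j + 1 = l + n) (h' : j + i + 1 = l + n) (a : HC i) (b : HC j) :
    cycBracket H HC n mul π β h a b
      = -((((i + 1) * (j + 1)).negOnePow : ℤ) • cycBracket H HC n mul π β h' b a) := by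
  rw [cycBracket_eq h (by omega : i + j = (i + j - n) + n) (by omega : l = (i + j - n) + 1),
    cycBracket_eq h' (by omega : j + i = (i + j - n) + n) (by omega : l = (i + j - n) + 1),
    hcomm _ (by omega : j + i = (i + j - n) + n), map_zsmul_of_map_add (hβ_add _)]
  simp only [negOnePow_smul_negOnePow_smul]
  rw [← neg_smul, ← Units.val_neg, ← Int.negOnePow_succ]
  exact negOnePow_smul_congr ⟨-j - 1, by ring⟩ _

end CyclicBracket

theorem cyclic_bracket_is_graded_lie
    -- `•` is biadditive, graded commutative and associative
    (hmul_addl : ∀ {i j l : ℤ} (h : i + j = l + n) (a a' : H i) (b : H j),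
      mul h (a + a') b = mul h a b + mul h a' b)
    (hmul_addr : ∀ {i j l : ℤ} (h : i + j = l + n) (a : H i) (b b' : H j),
      mul h a (b + b') = mul h a b + mul h a b')
    (hcomm : ∀ {i j l : ℤ} (h : i + j = l + n) (h' : j + i = l + n) (a : H i) (b : H j),
      mul h a b = (Int.negOnePow (i * j) : ℤ) • mul h' b a)
    -- `B` is additive and squares to zero
    (hB_add : ∀ {i j : ℤ} (h : j = i + 1) (a a' : H i), B h (a + a') = B h a + B h a')
    -- `B` is a second-order operator for `•`
    (hsecond : ∀ {i j m l : ℤ} (h : i + j + m + 1 = l + 2 * n) (x : H i) (y : H j) (z : H m),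
      B (by omega : l = (i + j + m - 2*n) + 1)
          (mul (by omega : (i + j - n) + m = (i + j + m - 2*n) + n)
            (mul (by omega : i + j = (i + j - n) + n) x y) z)
        = mul (by omega : (i + j - n + 1) + m = l + n)
            (B (by omega : i + j - n + 1 = (i + j - n) + 1) (mul (by omega : i + j = (i + j - n) + n) x y)) z
          + (Int.negOnePow (j * m) : ℤ) •
              mul (by omega : (i + m - n + 1) + j = l + n)
                (B (by omega : i + m - n + 1 = (i + m - n) + 1) (mul (by omega : i + m = (i + m - n) + n) x z)) y
          + (Int.negOnePow i : ℤ) •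
              mul (by omega : i + (j + m - n + 1) = l + n) x
                (B (by omega : j + m - n + 1 = (j + m - n) + 1) (mul (by omega : j + m = (j + m - n) + n) y z))
          - mul (by omega : (i + 1) + (j + m - n) = l + n)
              (B rfl x) (mul (by omega : j + m = (j + m - n) + n) y z)
          - (Int.negOnePow i : ℤ) •
              mul (by omega : i + (j + 1 + m - n) = l + n) x
                (mul (by omega : (j + 1) + m = (j + 1 + m - n) + n) (B rfl y) z)
          - (Int.negOnePow (i + j) : ℤ) •
              mul (by omega : (i + j - n) + (m + 1) = l + n) (mul (by omega : i + j = (i + j - n) + n) x y) (B rfl z))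
    -- `π` and `β`: `π ∘ β = B`, `β ∘ π = 0`, `β` additive
    (hπβ : ∀ {i j : ℤ} (h : j = i + 1) (x : H i), π j (β h x) = B h x)
    (hβπ : ∀ {i j : ℤ} (h : j = i + 1) (x : HC i), β h (π i x) = 0)
    (hβ_add : ∀ {i j : ℤ} (h : j = i + 1) (x y : H i), β h (x + y) = β h x + β h y) :
    -- graded skew-symmetry
    (∀ {i j l : ℤ} (h : i + j + 1 = l + n) (h' : j + i + 1 = l + n) (a : HC i) (b : HC j),
      cycBracket H HC n mul π β h a b
        = - ((Int.negOnePow ((i + 1) * (j + 1)) : ℤ) • cycBracket H HC n mul π β h' b a)) ∧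
    -- graded Jacobi identity
    (∀ {i j m l : ℤ} (h : i + j + m + 2 = l + 2 * n) (a : HC i) (b : HC j) (c : HC m),
      (Int.negOnePow ((i + 1) * (m + 1)) : ℤ) •
          cycBracket H HC n mul π β (by omega : (i + j + 1 - n) + m + 1 = l + n)
            (cycBracket H HC n mul π β
              (by omega : i + j + 1 = (i + j + 1 - n) + n) a b) c
        + (Int.negOnePow ((m + 1) * (j + 1)) : ℤ) •
            cycBracket H HC n mul π β (by omega : (m + i + 1 - n) + j + 1 = l + n)
              (cycBracket H HC n mul π β
                (by omega : m + i + 1 = (m + i + 1 - n) + n) c a) b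
        + (Int.negOnePow ((j + 1) * (i + 1)) : ℤ) •
            cycBracket H HC n mul π β (by omega : (j + m + 1 - n) + i + 1 = l + n)
              (cycBracket H HC n mul π β
                (by omega : j + m + 1 = (j + m + 1 - n) + n) b c) a
        = 0) := by
  refine ⟨cycBracket_swap hcomm hβ_add, fun {i j m l} h a b c => ?_⟩
  have term := fun {i j m l : ℤ} (h : i + j + m + 2 = l + 2 * n) =>
    negOnePow_smul_cycBracket_cycBracket hmul_addl hπβ hβ_add h
  have relation := fun {i j m l : ℤ} (h : i + j + m + 2 = l + 2 * n) =>
    nestedTerm_cyclic_relation hmul_addl hmul_addr hcomm hB_add hsecond hπβ hβπ hβ_add h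
  rw [term h, term (by omega : m + i + j + 2 = l + 2 * n),
    term (by omega : j + m + i + 2 = l + 2 * n), ← smul_add, ← smul_add,
    jacobi_sum_eq_zero_of_cyclic_relations (relation h a b c) (relation _ b c a)
      (relation _ c a b), smul_zero]

end
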